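/- arXiv:0906.2925 — 4 statements merged into one kernel-verified Lean document; each statement's English description precedes it below -/
import Mathlib

section
/- Let A be a UFD with fraction field K, let ρ : A → L be a ring homomorphism into a field L, and let f₁, …, f_n ∈ A[U,V] be nonzero homogeneous polynomials. Write g = gcd(f₁,…,f_n) ∈ A[U,V] and f_i = g·h_i. If ρ(h₁), …, ρ(h_n) have no common homogeneous factor of positive degree in L[U,V], then ρ(g) divides gcd(ρ(f₁),…,ρ(f_n)) and gcd(ρ(f₁),…,ρ(f_n)) divides ρ(g) in L[U,V]; in particular ρ(g) and gcd(ρ(f₁),…,ρ(f_n)) agree up to a unit of L. -/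
/-!
Since `ρ g` divides every `ρ (f i) = ρ g * ρ (h i)`, it divides `G`; write `G = ρ g * c`. If
`ρ g ≠ 0`, cancelling it shows that `c` divides every `ρ (h i)`, hence also some nonzero
homogeneous `ρ (f i)`. A divisor of a nonzero homogeneous polynomial over a domain is itself
homogeneous: substituting `x ↦ t • x` turns a homogeneous polynomial into a monomial in `t`, and
degree and trailing degree in `t` are additive. So `c` is a homogeneous common factor of the
`ρ (h i)`, which forces it to have degree `0`, i.e. to be a unit.
-/

namespace Polynomial

theorem coeff_eq_zero_of_natTrailingDegree_eq_natDegree {R : Type*} [Semiring R] {P : R[X]}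
    (hP : P.natTrailingDegree = P.natDegree) {i : ℕ} (hi : i ≠ P.natDegree) :
    P.coeff i = 0 := by
  rcases hi.lt_or_gt with hlt | hgt
  · exact coeff_eq_zero_of_lt_natTrailingDegree (hP ▸ hlt)
  · exact coeff_eq_zero_of_natDegree_lt hgt

end Polynomial

namespace MvPolynomial

variable {σ R : Type*}

section CommSemiring

variable [CommSemiring R]

/-- `p(t • x)`, viewed as a polynomial in `t`. -/
noncomputable def gradedPolynomial : MvPolynomial σ R →+* Polynomial (MvPolynomial σ R) :=
  (aeval fun i => Polynomial.C (X i) * Polynomial.X).toRingHom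

theorem gradedPolynomial_monomial (u : σ →₀ ℕ) (a : R) :
    gradedPolynomial (monomial u a) = Polynomial.monomial u.degree (monomial u a) := by
  simp only [gradedPolynomial, AlgHom.toRingHom_eq_coe, RingHom.coe_coe, aeval_monomial,
    Finsupp.prod, mul_pow, ← Polynomial.C_pow]
  rw [Finset.prod_mul_distrib, Finset.prod_pow_eq_pow_sum, ← map_prod,
    Polynomial.algebraMap_apply, algebraMap_eq, ← mul_assoc, ← Polynomial.C_mul,
    Polynomial.C_mul_X_pow_eq_monomial, monomial_eq, Finsupp.prod]
  rfl

theorem coeff_gradedPolynomial (p : MvPolynomial σ R) (k : ℕ) :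
    (gradedPolynomial p).coeff k = homogeneousComponent k p := by
  induction p using induction_on' with
  | monomial u a =>
    rw [gradedPolynomial_monomial, Polynomial.coeff_monomial,
      homogeneousComponent_of_mem (isHomogeneous_monomial a rfl)]
    simp only [eq_comm]
  | add p q hp hq => simp only [map_add, Polynomial.coeff_add, hp, hq]

theorem gradedPolynomial_ne_zero {p : MvPolynomial σ R} (hp : p ≠ 0) :
    gradedPolynomial p ≠ 0 := by
  contrapose! hp
  rw [← sum_homogeneousComponent p]
  exact Finset.sum_eq_zero fun k _ => by rw [← coeff_gradedPolynomial, hp, Polynomial.coeff_zero]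

theorem IsHomogeneous.gradedPolynomial_eq {p : MvPolynomial σ R} {n : ℕ}
    (hp : p.IsHomogeneous n) : gradedPolynomial p = Polynomial.monomial n p := by
  ext k : 1
  rw [coeff_gradedPolynomial, Polynomial.coeff_monomial, homogeneousComponent_of_mem hp]
  simp only [eq_comm]

theorem isHomogeneous_of_natTrailingDegree_eq_natDegree {p : MvPolynomial σ R}
    (hp : (gradedPolynomial p).natTrailingDegree = (gradedPolynomial p).natDegree) :
    p.IsHomogeneous (gradedPolynomial p).natDegree := by
  set k := (gradedPolynomial p).natDegree
  suffices hk : homogeneousComponent k p = p by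
    rw [← hk]
    exact homogeneousComponent_isHomogeneous k p
  ext d
  rw [coeff_homogeneousComponent]
  split_ifs with hd
  · rfl
  have hcomp : coeff d (homogeneousComponent d.degree p) = coeff d p := by
    rw [coeff_homogeneousComponent, if_pos rfl]
  rw [← hcomp, ← coeff_gradedPolynomial,
    Polynomial.coeff_eq_zero_of_natTrailingDegree_eq_natDegree hp hd, coeff_zero]

end CommSemiring

theorem IsHomogeneous.isHomogeneous_of_dvd [CommRing R] [IsDomain R] {F p : MvPolynomial σ R}
    {n : ℕ} (hF : F.IsHomogeneous n) (hF0 : F ≠ 0) (hpF : p ∣ F) :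
    p.IsHomogeneous (gradedPolynomial p).natDegree := by
  classical
  obtain ⟨q, rfl⟩ := hpF
  have hP := gradedPolynomial_ne_zero (left_ne_zero_of_mul hF0)
  have hQ := gradedPolynomial_ne_zero (right_ne_zero_of_mul hF0)
  have hPQ : gradedPolynomial p * gradedPolynomial q = Polynomial.monomial n (p * q) := by
    rw [← map_mul, hF.gradedPolynomial_eq]
  -- `gradedPolynomial (p * q)` is a monomial, so each factor has equal degree and trailing degree.
  have hdeg := Polynomial.natDegree_mul hP hQ
  have htrail := Polynomial.natTrailingDegree_mul hP hQ
  rw [hPQ, Polynomial.natDegree_monomial, if_neg hF0] at hdeg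
  rw [hPQ, Polynomial.natTrailingDegree_monomial hF0] at htrail
  have := Polynomial.natTrailingDegree_le_natDegree (gradedPolynomial p)
  have := Polynomial.natTrailingDegree_le_natDegree (gradedPolynomial q)
  exact isHomogeneous_of_natTrailingDegree_eq_natDegree (by omega)

theorem totalDegree_pos_of_not_isUnit {K : Type*} [Field K] {p : MvPolynomial σ K} (hp : p ≠ 0)
    (hunit : ¬IsUnit p) : 0 < p.totalDegree := by
  contrapose! hunit
  rw [totalDegree_eq_zero_iff_eq_C.mp (Nat.le_zero.mp hunit)] at hp ⊢
  exact (Ne.isUnit (by simpa using hp)).map C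

end MvPolynomial

open MvPolynomial in
theorem stmt_1_general {A : Type*} [CommRing A]
    {L : Type*} [Field L] (ρ : A →+* L) (n : ℕ)
    (f : Fin n → MvPolynomial (Fin 2) A) (df : Fin n → ℕ)
    (hfh : ∀ i, (f i).IsHomogeneous (df i))
    (g : MvPolynomial (Fin 2) A)
    (h : Fin n → MvPolynomial (Fin 2) A) (hfac : ∀ i, f i = g * h i)
    -- the ρ(h i) have no common homogeneous factor of positive degree :
    (hnocf : ¬ ∃ (c : MvPolynomial (Fin 2) L) (e : ℕ), 0 < c.totalDegree ∧
        c.IsHomogeneous e ∧ ∀ i, c ∣ MvPolynomial.map ρ (h i))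
    -- G is a gcd of the ρ(f i) :
    (G : MvPolynomial (Fin 2) L)
    (hGdvd : ∀ i, G ∣ MvPolynomial.map ρ (f i))
    (hGgcd : ∀ e : MvPolynomial (Fin 2) L, (∀ i, e ∣ MvPolynomial.map ρ (f i)) → e ∣ G) :
    MvPolynomial.map ρ g ∣ G ∧ G ∣ MvPolynomial.map ρ g := by
  have hmapf (i : Fin n) : map ρ (f i) = map ρ g * map ρ (h i) := by rw [hfac i, map_mul]
  obtain ⟨c, hc⟩ : map ρ g ∣ G := hGgcd _ fun i => hmapf i ▸ dvd_mul_right _ _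
  refine ⟨⟨c, hc⟩, ?_⟩
  by_cases hg0 : map ρ g = 0
  · simp [hc, hg0]
  have hch (i : Fin n) : c ∣ map ρ (h i) := by
    rw [← mul_dvd_mul_iff_left hg0, ← hc, ← hmapf]
    exact hGdvd i
  obtain ⟨i, hi⟩ : ∃ i, map ρ (h i) ≠ 0 := by
    by_contra! hzero
    exact hnocf ⟨X 0, 1, by simp, isHomogeneous_X L 0, fun i => hzero i ▸ dvd_zero _⟩
  have hfi : map ρ (f i) ≠ 0 := hmapf i ▸ mul_ne_zero hg0 hi
  have hcf : c ∣ map ρ (f i) := (hch i).trans (hmapf i ▸ dvd_mul_left _ _)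
  have hcunit : IsUnit c := by
    by_contra hcu
    exact hnocf ⟨c, _, totalDegree_pos_of_not_isUnit (ne_zero_of_dvd_ne_zero hfi hcf) hcu,
      ((hfh i).map ρ).isHomogeneous_of_dvd hfi hcf, hch⟩
  rw [hc]
  exact hcunit.mul_right_dvd.mpr dvd_rfl

/-- GCD of several binary forms under specialization: if `g = gcd(f₁,…,f_n)` in `A[U,V]`,
`f i = g * h i`, and the images `ρ(h i)` have no common homogeneous factor of positive
degree in `L[U,V]`, then `ρ(g)` agrees with any gcd of the `ρ(f i)` up to a unit. -/
theorem stmt_1 {A : Type*} [CommRing A] [IsDomain A] [UniqueFactorizationMonoid A]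
    {L : Type*} [Field L] (ρ : A →+* L) (n : ℕ) (hn : 2 ≤ n)
    (f : Fin n → MvPolynomial (Fin 2) A) (df : Fin n → ℕ)
    (hf0 : ∀ i, f i ≠ 0) (hfh : ∀ i, (f i).IsHomogeneous (df i))
    (g : MvPolynomial (Fin 2) A)
    -- g is a gcd of the f i :
    (hgdvd : ∀ i, g ∣ f i)
    (hggcd : ∀ e : MvPolynomial (Fin 2) A, (∀ i, e ∣ f i) → e ∣ g)
    (h : Fin n → MvPolynomial (Fin 2) A) (hfac : ∀ i, f i = g * h i)
    -- the ρ(h i) have no common homogeneous factor of positive degree :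
    (hnocf : ¬ ∃ (c : MvPolynomial (Fin 2) L) (e : ℕ), 0 < c.totalDegree ∧
        c.IsHomogeneous e ∧ ∀ i, c ∣ MvPolynomial.map ρ (h i))
    -- G is a gcd of the ρ(f i) :
    (G : MvPolynomial (Fin 2) L)
    (hGdvd : ∀ i, G ∣ MvPolynomial.map ρ (f i))
    (hGgcd : ∀ e : MvPolynomial (Fin 2) L, (∀ i, e ∣ MvPolynomial.map ρ (f i)) → e ∣ G) :
    MvPolynomial.map ρ g ∣ G ∧ G ∣ MvPolynomial.map ρ g :=
  stmt_1_general ρ n f df hfh g h hfac hnocf G hGdvd hGgcd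
end

section
/- Let A be an integral domain, P ∈ A[X₁,…,X_n] a nonzero polynomial of total degree at most d, and S a finite nonempty subset of A. Then the number of n-tuples (x₁,…,x_n) ∈ Sⁿ with P(x₁,…,x_n) = 0 is at most d·|S|^{n-1}. Equivalently, for a uniformly random choice of the x_i in S, the probability that P(x₁,…,x_n) = 0 is at most d/|S|. -/
open MvPolynomial Finset

theorem MvPolynomial.card_zeros_mul_card_le_totalDegree_mul {R : Type*} [CommRing R] [IsDomain R]
    [DecidableEq R] {n : ℕ} {p : MvPolynomial (Fin n) R} (hp : p ≠ 0) (S : Finset R) :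
    #{f ∈ Fintype.piFinset fun _ : Fin n ↦ S | eval f p = 0} * #S ≤ p.totalDegree * #S ^ n := by
  obtain rfl | hS := S.eq_empty_or_nonempty
  · simp
  have hS : (0 : ℚ≥0) < #S := by exact_mod_cast hS.card_pos
  have h := schwartz_zippel_totalDegree hp S
  rw [div_le_div_iff₀ (by positivity) hS] at h
  exact_mod_cast h

/-- Zippel–Schwartz lemma: a nonzero polynomial of total degree at most `d` in `n`
variables over an integral domain vanishes on at most `d * |S|^(n-1)` points of `Sⁿ`. -/
theorem stmt_2 {A : Type*} [CommRing A] [IsDomain A] [DecidableEq A]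
    {n d : ℕ} (P : MvPolynomial (Fin n) A) (hP : P ≠ 0) (hdeg : P.totalDegree ≤ d)
    (S : Finset A) (hS : S.Nonempty) :
    ((Fintype.piFinset fun _ : Fin n => S).filter
        (fun x => MvPolynomial.eval x P = 0)).card ≤ d * S.card ^ (n - 1) := by
  refine Nat.le_of_mul_le_mul_right ?_ hS.card_pos
  calc _ ≤ P.totalDegree * #S ^ n := card_zeros_mul_card_le_totalDegree_mul hP S
    _ ≤ d * (#S ^ (n - 1) * #S) := by
      rw [← pow_succ]
      gcongr
      · exact hS.card_pos
      · omega
    _ = d * #S ^ (n - 1) * #S := (mul_assoc ..).symm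
end

section
/- Let K be a field and let f, g ∈ K[X₁,…,X_n] (n ≥ 1) with g ≠ 0 and gcd(f,g) = 1. Suppose the rational function r = f/g can be written as r = u ∘ h where u ∈ K(T) with deg u ≥ 2 and h ∈ K(X₁,…,X_n). Writing u = u₁/u₂ with u₁, u₂ ∈ K[T] coprime, and h = h₁/h₂ reduced, and λ ∈ K such that u₁ − λu₂ splits over the algebraic closure of K as α·∏_{i=1}^m (T − λ_i) with m = deg u ≥ 2, then f − λg = (unit)·∏_{i=1}^m (h₁ − λ_i h₂) up to a nonzero constant in the algebraic closure; in particular f − λg is reducible in the polynomial ring over the algebraic closure of K whenever deg(f − λ g) = max(deg f, deg g) and each h₁ − λ_i h₂ is non-constant. -/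
/-!
For `q ∈ K[T]` put `N q = h₂ ^ m * q (h₁ / h₂)`, the degree-`m` homogenization of `q` evaluated
at `(h₁, h₂)`; it is a polynomial, and the composition identity reads `f * N u₂ = g * N u₁`.
Homogenizing a Bézout relation `a u₁ + b u₂ = 1` puts a power of `h₂` into the ideal
`(N u₁, N u₂)`, while modulo `h₂` the `N uᵢ` with `deg uᵢ = m` is a unit times `h₁ ^ m`. Since `h₁, h₂` are coprime, so are `N u₁, N u₂`; as `f / g` is reduced as well,
`N u₁ = e f` and `N u₂ = e g` for a nonzero constant `e`. Hence `e (f - λ g) = N (u₁ - λ u₂)`, and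
homogenizing the splitting of `u₁ - λ u₂` turns it into `α ∏ (h₁ - λᵢ h₂)`.
-/

open Polynomial

namespace MvPolynomial

theorem algHom_aeval_vecCons {R A B : Type*} [CommSemiring R] [CommSemiring A]
    [CommSemiring B] [Algebra R A] [Algebra R B] (φ : A →ₐ[R] B) (x y : A)
    (P : MvPolynomial (Fin 2) R) :
    φ (aeval ![x, y] P) = aeval ![φ x, φ y] P := by
  rw [comp_aeval_apply]
  congr 2
  funext i
  fin_cases i <;> rfl

end MvPolynomial

namespace Polynomial

section CommSemiring

variable {R A : Type*} [CommSemiring R] [CommSemiring A] [Algebra R A]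

theorem aeval_homogenize_eq_pow_mul_aeval_div {F : Type*} [Field F] [Algebra R F] {q : R[X]}
    {m : ℕ} (hq : q.natDegree ≤ m) (x : F) {y : F} (hy : y ≠ 0) :
    MvPolynomial.aeval ![x, y] (q.homogenize m) = y ^ m * aeval (x / y) q := by
  rw [MvPolynomial.aeval_def, MvPolynomial.eval₂_eq_eval_map, ← homogenize_map,
    eval_homogenize (natDegree_map_le.trans hq) _ (by simpa using hy)]
  simp [eval_map_algebraMap, mul_comm]

theorem map_aeval_homogenize {S σ : Type*} [CommSemiring S] (τ : R →+* S) (q : R[X]) (m : ℕ)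
    (x y : MvPolynomial σ R) :
    MvPolynomial.map τ (MvPolynomial.aeval ![x, y] (q.homogenize m)) =
      MvPolynomial.aeval ![MvPolynomial.map τ x, MvPolynomial.map τ y]
        ((q.map τ).homogenize m) := by
  rw [MvPolynomial.aeval_eq_bind₁, MvPolynomial.map_bind₁, homogenize_map,
    MvPolynomial.aeval_eq_bind₁]
  congr 2
  funext i
  fin_cases i <;> rfl

theorem aeval_homogenize_mul_add_mul {a b p q : R[X]} {k m : ℕ} (ha : a.natDegree ≤ k)
    (hb : b.natDegree ≤ k) (hp : p.natDegree ≤ m) (hq : q.natDegree ≤ m)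
    (hab : a * p + b * q = 1) (x y : A) :
    MvPolynomial.aeval ![x, y] (a.homogenize k) * MvPolynomial.aeval ![x, y] (p.homogenize m)
      + MvPolynomial.aeval ![x, y] (b.homogenize k) * MvPolynomial.aeval ![x, y] (q.homogenize m)
      = y ^ (k + m) := by
  have h := congrArg (fun r : R[X] => MvPolynomial.aeval ![x, y] (r.homogenize (k + m))) hab
  simpa [homogenize_mul _ _ ha hp, homogenize_mul _ _ hb hq] using h

end CommSemiring

section CommRing

variable {R A : Type*} [CommRing R] [CommRing A] [Algebra R A]

theorem aeval_homogenize_C_mul_prod_X_sub_C (x y : A) (a : R) {ι : Type*} (s : Finset ι)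
    (r : ι → R) :
    MvPolynomial.aeval ![x, y] ((C a * ∏ i ∈ s, (X - C (r i))).homogenize s.card)
      = algebraMap R A a * ∏ i ∈ s, (x - algebraMap R A (r i) * y) := by
  rw [homogenize_C_mul, Finset.card_eq_sum_ones,
    homogenize_finsetProd (n := fun _ => 1) fun i _ => natDegree_X_sub_C_le (r i)]
  simp

theorem X_one_dvd_homogenize_sub {q : R[X]} {m : ℕ} (hq : q.natDegree ≤ m) :
    MvPolynomial.X 1 ∣ q.homogenize m - MvPolynomial.C (q.coeff m) * MvPolynomial.X 0 ^ m := by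
  cases m with
  | zero =>
    obtain ⟨c, rfl⟩ : ∃ c, q = C c := ⟨_, eq_C_of_natDegree_le_zero hq⟩
    simp
  | succ j =>
    set r := q - C (q.coeff (j + 1)) * X ^ (j + 1)
    have hr : r.natDegree ≤ j := by
      rw [natDegree_le_iff_coeff_eq_zero]
      intro N hN
      rcases eq_or_lt_of_le (Nat.succ_le_of_lt hN) with rfl | hN'
      · simp [r]
      · simp [r, coeff_eq_zero_of_natDegree_lt (hq.trans_lt hN'), coeff_X_pow, hN'.ne']
    have hsplit : q.homogenize (j + 1) = MvPolynomial.C (q.coeff (j + 1)) *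
        MvPolynomial.X 0 ^ (j + 1) + r.homogenize j * MvPolynomial.X 1 := by
      conv_lhs => rw [show q = C (q.coeff (j + 1)) * X ^ (j + 1) + r * 1 by ring]
      rw [homogenize_add, homogenize_mul r 1 hr (natDegree_one.trans_le zero_le_one)]
      simp
    rw [hsplit, add_sub_cancel_left]
    exact dvd_mul_left _ _

theorem isRelPrime_aeval_homogenize_of_isUnit_coeff [DecompositionMonoid A] {x y : A}
    (hxy : IsRelPrime x y) {q : R[X]} {m : ℕ} (hq : q.natDegree ≤ m) (hc : IsUnit (q.coeff m)) :
    IsRelPrime (MvPolynomial.aeval ![x, y] (q.homogenize m)) y := by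
  obtain ⟨Q, hQ⟩ := X_one_dvd_homogenize_sub hq
  rw [sub_eq_iff_eq_add'] at hQ
  have hlead : IsRelPrime (algebraMap R A (q.coeff m) * x ^ m) y :=
    (isRelPrime_mul_unit_left_left (hc.map _)).2 hxy.pow_left
  refine IsRelPrime.of_add_mul_left_left (z := -MvPolynomial.aeval ![x, y] Q) ?_
  simpa [hQ] using hlead

theorem coeff_max_natDegree_ne_zero_of_isRelPrime {K : Type*} [Field K] {p q : K[X]}
    (hpq : IsRelPrime p q) :
    p.coeff (max p.natDegree q.natDegree) ≠ 0 ∨ q.coeff (max p.natDegree q.natDegree) ≠ 0 := by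
  wlog hle : q.natDegree ≤ p.natDegree generalizing p q
  · rw [max_comm, or_comm]
    exact this hpq.symm (le_of_not_ge hle)
  rw [max_eq_left hle]
  by_cases hp : p = 0
  · subst hp
    have hq : q.natDegree = 0 := by simpa using hle
    right
    simpa [← hq] using (isRelPrime_zero_left.1 hpq).ne_zero
  · exact Or.inl (leadingCoeff_ne_zero.2 hp)

theorem isRelPrime_aeval_homogenize {K : Type*} [Field K] [Algebra K A] [DecompositionMonoid A]
    {x y : A} (hxy : IsRelPrime x y) {p q : K[X]} (hpq : IsRelPrime p q) {m : ℕ}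
    (hm : m = max p.natDegree q.natDegree) :
    IsRelPrime (MvPolynomial.aeval ![x, y] (p.homogenize m))
      (MvPolynomial.aeval ![x, y] (q.homogenize m)) := by
  have hp : p.natDegree ≤ m := hm ▸ le_max_left _ _
  have hq : q.natDegree ≤ m := hm ▸ le_max_right _ _
  obtain ⟨a, b, hab⟩ := isRelPrime_iff_isCoprime.1 hpq
  have hbezout := aeval_homogenize_mul_add_mul (le_max_left a.natDegree b.natDegree)
    (le_max_right _ _) hp hq hab x y
  intro d hdp hdq
  have hdy : d ∣ y ^ (max a.natDegree b.natDegree + m) :=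
    hbezout ▸ dvd_add (dvd_mul_of_dvd_right hdp _) (dvd_mul_of_dvd_right hdq _)
  rcases hm ▸ coeff_max_natDegree_ne_zero_of_isRelPrime hpq with hc | hc
  · exact (isRelPrime_aeval_homogenize_of_isUnit_coeff hxy hp hc.isUnit).pow_right hdp hdy
  · exact (isRelPrime_aeval_homogenize_of_isUnit_coeff hxy hq hc.isUnit).pow_right hdq hdy

theorem mul_aeval_homogenize_eq_of_mul_aeval_div_eq [IsDomain A] {f g x y : A} (hy : y ≠ 0)
    {p q : R[X]} {m : ℕ} (hp : p.natDegree ≤ m) (hq : q.natDegree ≤ m)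
    (h : algebraMap A (FractionRing A) f *
        aeval (algebraMap A (FractionRing A) x / algebraMap A (FractionRing A) y) q =
      algebraMap A (FractionRing A) g *
        aeval (algebraMap A (FractionRing A) x / algebraMap A (FractionRing A) y) p) :
    f * MvPolynomial.aeval ![x, y] (q.homogenize m) =
      g * MvPolynomial.aeval ![x, y] (p.homogenize m) := by
  set φ := algebraMap A (FractionRing A)
  have hφ {r : R[X]} (hr : r.natDegree ≤ m) :
      φ (MvPolynomial.aeval ![x, y] (r.homogenize m)) = φ y ^ m * aeval (φ x / φ y) r := by
    rw [← IsScalarTower.coe_toAlgHom' R, MvPolynomial.algHom_aeval_vecCons,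
      IsScalarTower.coe_toAlgHom', aeval_homogenize_eq_pow_mul_aeval_div hr]
    exact (map_ne_zero_iff _ (IsFractionRing.injective _ _)).2 hy
  apply IsFractionRing.injective A (FractionRing A)
  rw [map_mul, map_mul, hφ hp, hφ hq]
  linear_combination φ y ^ m * h

end CommRing

end Polynomial

theorem IsRelPrime.exists_isUnit_of_mul_eq_mul {A : Type*} [CommMonoidWithZero A]
    [IsCancelMulZero A] [DecompositionMonoid A] {f g a b : A} (hfg : IsRelPrime f g)
    (hab : IsRelPrime a b) (hg : g ≠ 0) (h : f * b = g * a) :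
    ∃ w, IsUnit w ∧ a = f * w ∧ b = g * w := by
  obtain ⟨w, rfl⟩ := hfg.symm.dvd_of_dvd_mul_left ⟨a, h⟩
  have ha : a = f * w := mul_left_cancel₀ hg (by rw [← h, mul_left_comm])
  exact ⟨w, hab (ha ▸ dvd_mul_left w f) (dvd_mul_left w g), ha, rfl⟩

namespace MvPolynomial

theorem exists_mul_eq_C_mul_prod {R σ : Type*} [CommRing R] [IsDomain R] {m : ℕ} (hm : 2 ≤ m)
    {c : R} (hc : c ≠ 0) {F : Fin m → MvPolynomial σ R} (hF : ∀ i, 0 < (F i).totalDegree) :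
    ∃ a b : MvPolynomial σ R, 0 < a.totalDegree ∧ 0 < b.totalDegree ∧ C c * ∏ i, F i = a * b := by
  obtain ⟨k, rfl⟩ : ∃ k, m = k + 2 := ⟨m - 2, by omega⟩
  have hF0 : ∀ i, F i ≠ 0 := fun i h => by simpa [h] using hF i
  have hpos_of_dvd : ∀ {i} {P : MvPolynomial σ R}, F i ∣ P → P ≠ 0 → 0 < P.totalDegree :=
    fun hdvd hP => (hF _).trans_le (totalDegree_le_of_dvd_of_isDomain hdvd hP)
  refine ⟨C c * F 0, ∏ i : Fin (k + 1), F i.succ, ?_, ?_, ?_⟩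
  · exact hpos_of_dvd (dvd_mul_left _ _) (mul_ne_zero (C_ne_zero.2 hc) (hF0 0))
  · exact hpos_of_dvd (i := Fin.succ 0)
      (Finset.dvd_prod_of_mem (fun i : Fin (k + 1) => F i.succ) (Finset.mem_univ 0))
      (Finset.prod_ne_zero_iff.2 fun i _ => hF0 _)
  · rw [Fin.prod_univ_succ, ← mul_assoc]

end MvPolynomial

theorem stmt_8_general {K : Type*} [Field K] {n : ℕ}
    (f g : MvPolynomial (Fin n) K) (hg : g ≠ 0) (hfg : IsRelPrime f g)
    (u₁ u₂ : Polynomial K) (hu : IsRelPrime u₁ u₂)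
    (m : ℕ) (hm : 2 ≤ m) (hmdeg : m = max u₁.natDegree u₂.natDegree)
    (h₁ h₂ : MvPolynomial (Fin n) K) (hh₂ : h₂ ≠ 0) (hh : IsRelPrime h₁ h₂)
    -- the composition identity  f/g = u₁(h₁/h₂) / u₂(h₁/h₂)  in the fraction field :
    (hcomp : (algebraMap (MvPolynomial (Fin n) K) (FractionRing (MvPolynomial (Fin n) K)) f) *
        Polynomial.aeval
          ((algebraMap (MvPolynomial (Fin n) K) (FractionRing (MvPolynomial (Fin n) K)) h₁) /
           (algebraMap (MvPolynomial (Fin n) K) (FractionRing (MvPolynomial (Fin n) K)) h₂)) u₂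
      = (algebraMap (MvPolynomial (Fin n) K) (FractionRing (MvPolynomial (Fin n) K)) g) *
        Polynomial.aeval
          ((algebraMap (MvPolynomial (Fin n) K) (FractionRing (MvPolynomial (Fin n) K)) h₁) /
           (algebraMap (MvPolynomial (Fin n) K) (FractionRing (MvPolynomial (Fin n) K)) h₂)) u₁)
    (lam : K) (α : AlgebraicClosure K) (hα : α ≠ 0) (lams : Fin m → AlgebraicClosure K)
    -- splitting of  u₁ - λ·u₂  over the algebraic closure :
    (hsplit : Polynomial.map (algebraMap K (AlgebraicClosure K)) (u₁ - Polynomial.C lam * u₂)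
      = Polynomial.C α * ∏ i : Fin m, (Polynomial.X - Polynomial.C (lams i))) :
    (∃ c : AlgebraicClosure K, c ≠ 0 ∧
        MvPolynomial.map (algebraMap K (AlgebraicClosure K)) (f - MvPolynomial.C lam * g)
          = MvPolynomial.C c * ∏ i : Fin m,
              (MvPolynomial.map (algebraMap K (AlgebraicClosure K)) h₁
               - MvPolynomial.C (lams i) *
                   MvPolynomial.map (algebraMap K (AlgebraicClosure K)) h₂)) ∧
      ((f - MvPolynomial.C lam * g).totalDegree = max f.totalDegree g.totalDegree →
       (∀ i : Fin m, 0 < (MvPolynomial.map (algebraMap K (AlgebraicClosure K)) h₁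
               - MvPolynomial.C (lams i) *
                   MvPolynomial.map (algebraMap K (AlgebraicClosure K)) h₂).totalDegree) →
       ∃ a b : MvPolynomial (Fin n) (AlgebraicClosure K),
         0 < a.totalDegree ∧ 0 < b.totalDegree ∧
         MvPolynomial.map (algebraMap K (AlgebraicClosure K)) (f - MvPolynomial.C lam * g)
           = a * b) := by
  set ι := algebraMap K (AlgebraicClosure K)
  obtain ⟨w, hw, hN₁, hN₂⟩ := hfg.exists_isUnit_of_mul_eq_mul
    (isRelPrime_aeval_homogenize hh hu hmdeg) hg
    (mul_aeval_homogenize_eq_of_mul_aeval_div_eq hh₂ (hmdeg ▸ le_max_left _ _)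
      (hmdeg ▸ le_max_right _ _) hcomp)
  obtain ⟨e, he, rfl⟩ := MvPolynomial.isUnit_iff_eq_C_of_isReduced.1 hw
  have hfactor : MvPolynomial.map ι (f - MvPolynomial.C lam * g) * MvPolynomial.C (ι e) =
      MvPolynomial.C α * ∏ i : Fin m,
        (MvPolynomial.map ι h₁ - MvPolynomial.C (lams i) * MvPolynomial.map ι h₂) := by
    have hprod := aeval_homogenize_C_mul_prod_X_sub_C
      (MvPolynomial.map ι h₁) (MvPolynomial.map ι h₂) α Finset.univ lams
    rw [Finset.card_univ, Fintype.card_fin, ← hsplit, ← map_aeval_homogenize] at hprod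
    rw [← MvPolynomial.map_C, ← map_mul, sub_mul, mul_assoc, ← hN₁, ← hN₂]
    simpa [MvPolynomial.algebraMap_eq] using hprod
  have hdecomp : ∃ c, c ≠ 0 ∧ MvPolynomial.map ι (f - MvPolynomial.C lam * g) =
      MvPolynomial.C c * ∏ i : Fin m,
        (MvPolynomial.map ι h₁ - MvPolynomial.C (lams i) * MvPolynomial.map ι h₂) := by
    have he' : ι e ≠ 0 := (_root_.map_ne_zero ι).2 he.ne_zero
    refine ⟨α / ι e, div_ne_zero hα he', ?_⟩
    rw [div_eq_mul_inv, mul_comm α, MvPolynomial.C_mul, mul_assoc, ← hfactor, mul_left_comm,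
      ← MvPolynomial.C_mul, inv_mul_cancel₀ he', MvPolynomial.C_1, mul_one]
  refine ⟨hdecomp, fun _ hpos => ?_⟩
  obtain ⟨c, hc, hceq⟩ := hdecomp
  rw [hceq]
  exact MvPolynomial.exists_mul_eq_C_mul_prod hm hc hpos

/-- If the reduced rational function `f/g` decomposes as `u(h₁/h₂)` with `deg u = m ≥ 2`,
and `u₁ - λ·u₂` splits over the algebraic closure as `α·∏ᵢ (T - λᵢ)`, then `f - λ·g` is,
up to a nonzero constant over the algebraic closure, the product `∏ᵢ (h₁ - λᵢ·h₂)`;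
in particular `f - λ·g` is reducible over the algebraic closure whenever it has degree
`d = max(deg f, deg g)` and each factor `h₁ - λᵢ·h₂` is non-constant. -/
theorem stmt_8 {K : Type*} [Field K] {n : ℕ} (hn : 1 ≤ n)
    (f g : MvPolynomial (Fin n) K) (hg : g ≠ 0) (hfg : IsRelPrime f g)
    (u₁ u₂ : Polynomial K) (hu : IsRelPrime u₁ u₂)
    (m : ℕ) (hm : 2 ≤ m) (hmdeg : m = max u₁.natDegree u₂.natDegree)
    (h₁ h₂ : MvPolynomial (Fin n) K) (hh₂ : h₂ ≠ 0) (hh : IsRelPrime h₁ h₂)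
    -- the composition identity  f/g = u₁(h₁/h₂) / u₂(h₁/h₂)  in the fraction field :
    (hu₂ne : Polynomial.aeval
        ((algebraMap (MvPolynomial (Fin n) K) (FractionRing (MvPolynomial (Fin n) K)) h₁) /
         (algebraMap (MvPolynomial (Fin n) K) (FractionRing (MvPolynomial (Fin n) K)) h₂)) u₂ ≠ 0)
    (hcomp : (algebraMap (MvPolynomial (Fin n) K) (FractionRing (MvPolynomial (Fin n) K)) f) *
        Polynomial.aeval
          ((algebraMap (MvPolynomial (Fin n) K) (FractionRing (MvPolynomial (Fin n) K)) h₁) /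
           (algebraMap (MvPolynomial (Fin n) K) (FractionRing (MvPolynomial (Fin n) K)) h₂)) u₂
      = (algebraMap (MvPolynomial (Fin n) K) (FractionRing (MvPolynomial (Fin n) K)) g) *
        Polynomial.aeval
          ((algebraMap (MvPolynomial (Fin n) K) (FractionRing (MvPolynomial (Fin n) K)) h₁) /
           (algebraMap (MvPolynomial (Fin n) K) (FractionRing (MvPolynomial (Fin n) K)) h₂)) u₁)
    (lam : K) (α : AlgebraicClosure K) (hα : α ≠ 0) (lams : Fin m → AlgebraicClosure K)
    -- splitting of  u₁ - λ·u₂  over the algebraic closure :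
    (hsplit : Polynomial.map (algebraMap K (AlgebraicClosure K)) (u₁ - Polynomial.C lam * u₂)
      = Polynomial.C α * ∏ i : Fin m, (Polynomial.X - Polynomial.C (lams i))) :
    (∃ c : AlgebraicClosure K, c ≠ 0 ∧
        MvPolynomial.map (algebraMap K (AlgebraicClosure K)) (f - MvPolynomial.C lam * g)
          = MvPolynomial.C c * ∏ i : Fin m,
              (MvPolynomial.map (algebraMap K (AlgebraicClosure K)) h₁
               - MvPolynomial.C (lams i) *
                   MvPolynomial.map (algebraMap K (AlgebraicClosure K)) h₂)) ∧
      ((f - MvPolynomial.C lam * g).totalDegree = max f.totalDegree g.totalDegree →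
       (∀ i : Fin m, 0 < (MvPolynomial.map (algebraMap K (AlgebraicClosure K)) h₁
               - MvPolynomial.C (lams i) *
                   MvPolynomial.map (algebraMap K (AlgebraicClosure K)) h₂).totalDegree) →
       ∃ a b : MvPolynomial (Fin n) (AlgebraicClosure K),
         0 < a.totalDegree ∧ 0 < b.totalDegree ∧
         MvPolynomial.map (algebraMap K (AlgebraicClosure K)) (f - MvPolynomial.C lam * g)
           = a * b) :=
  stmt_8_general f g hg hfg u₁ u₂ hu m hm hmdeg h₁ h₂ hh₂ hh hcomp lam α hα lams hsplit
end

section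
/- Let K be a field and f, g ∈ K[X₁,…,X_n] coprime with g ≠ 0 and d = max(deg f, deg g) ≥ 1. If the set σ(f,g) = { λ in the algebraic closure of K : deg(f − λg) < d or f − λg is reducible over the algebraic closure } is infinite, then the polynomial f − T·g is reducible in L[X₁,…,X_n], where L is the algebraic closure of K(T). (Contrapositive of (iii) ⇒ (ii) combined with finiteness of the spectrum.) -/
/-!
For each of the infinitely many `λ` with `f - λ g` a product of nonconstants over `K̄`, pick such
a factorization `a_λ b_λ`. The degrees of the factors are bounded by `deg (f - λ g)`, so all of them
live in a finite set of monomials, and the ultraproduct of `K̄` along a nonprincipal ultrafilter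
on these `λ` carries a factorization of `f - t g` into nonconstants, where `t` is the class of
`(λ)`. Since a nonzero polynomial has finitely many roots, `t` is transcendental over `K`, so
`K(T)` embeds with `T ↦ t`, and `L = (K(T))‾` embeds into an algebraic closure `E` of the
ultraproduct. A factorization of `f - T g` with two prescribed coefficients nonzero is a system of
polynomial equations and one inequation over `L`; it is solvable in `E`, hence in `L` by the
Nullstellensatz. The `λ` where the degree drops form at most one point.
-/

open Filter

theorem Filter.Germ.injective_eval₂RingHom_coe {K Ω ι : Type*} [Field K] [Field Ω] (φ : K →+* Ω)
    {U : Ultrafilter ι} (hU : (U : Filter ι) ≤ cofinite) {lam : ι → Ω}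
    (hlam : Function.Injective lam) :
    Function.Injective (Polynomial.eval₂RingHom
      ((coeRingHom (U : Filter ι)).comp ((Pi.constRingHom ι Ω).comp φ)) (coeRingHom _ lam)) := by
  rw [injective_iff_map_eq_zero]
  intro p hp
  by_contra hp0
  have hroots : {i | p.eval₂ φ (lam i) = 0}.Finite := by
    refine (Polynomial.finite_setOfPred_isRoot (Polynomial.map_ne_zero hp0 (f := φ))).preimage
      hlam.injOn |>.subset fun i hi => ?_
    simpa [Polynomial.eval_map] using hi
  have hp' : coeRingHom (U : Filter ι) (fun i => p.eval₂ φ (lam i)) = 0 := by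
    rw [← hp, Polynomial.coe_eval₂RingHom, ← Polynomial.hom_eval₂]
    congr 1
    funext i
    exact (Polynomial.hom_eval₂ p ((Pi.constRingHom ι Ω).comp φ) (Pi.evalRingHom _ i) lam).symm
  rw [coe_coeRingHom] at hp'
  exact U.compl_mem_iff_notMem.1 (hU hroots.compl_mem_cofinite) (coe_eq.1 hp')

theorem Filter.Germ.exists_ratFunc_ringHom {K Ω ι : Type*} [Field K] [Field Ω] (φ : K →+* Ω)
    {U : Ultrafilter ι} (hU : (U : Filter ι) ≤ cofinite) {lam : ι → Ω}
    (hlam : Function.Injective lam) :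
    ∃ ρ : RatFunc K →+* Germ (U : Filter ι) Ω,
      ρ.comp (algebraMap K (RatFunc K)) = (coeRingHom _).comp ((Pi.constRingHom ι Ω).comp φ) ∧
        ρ RatFunc.X = coeRingHom _ lam := by
  refine ⟨RatFunc.liftRingHom _ (nonZeroDivisors_le_comap_nonZeroDivisors_of_injective _
    (injective_eval₂RingHom_coe φ hU hlam)), ?_, by simp⟩
  ext x
  simp

namespace MvPolynomial

variable {σ R S : Type*}

def IsProductOfNonconstants [CommSemiring R] (p : MvPolynomial σ R) : Prop :=
  ∃ a b : MvPolynomial σ R, 0 < a.totalDegree ∧ 0 < b.totalDegree ∧ p = a * b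

section CommSemiring

variable [CommSemiring R]

theorem totalDegree_pos_iff {p : MvPolynomial σ R} :
    0 < p.totalDegree ↔ ∃ m ∈ p.support, m ≠ 0 := by
  simp [Nat.pos_iff_ne_zero, totalDegree_eq_zero_iff, DFunLike.ext_iff]

theorem totalDegree_map_of_injective [CommSemiring S] {φ : R →+* S}
    (hφ : Function.Injective φ) (p : MvPolynomial σ R) :
    (map φ p).totalDegree = p.totalDegree := by
  rw [totalDegree, totalDegree, support_map_of_injective _ hφ]

theorem totalDegree_map_le [CommSemiring S] (φ : R →+* S) (p : MvPolynomial σ R) :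
    (map φ p).totalDegree ≤ p.totalDegree :=
  Finset.sup_mono (support_map_subset _ _)

theorem IsProductOfNonconstants.map_of_injective [CommSemiring S] {p : MvPolynomial σ R}
    (hp : p.IsProductOfNonconstants) {φ : R →+* S} (hφ : Function.Injective φ) :
    (MvPolynomial.map φ p).IsProductOfNonconstants := by
  obtain ⟨a, b, ha, hb, rfl⟩ := hp
  exact ⟨MvPolynomial.map φ a, MvPolynomial.map φ b, by rwa [totalDegree_map_of_injective hφ],
    by rwa [totalDegree_map_of_injective hφ], map_mul _ _ _⟩

noncomputable def ofCoeffs (s : Finset (σ →₀ ℕ)) (c : s → R) : MvPolynomial σ R :=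
  ∑ m : s, monomial (m : σ →₀ ℕ) (c m)

theorem coeff_ofCoeffs (s : Finset (σ →₀ ℕ)) (c : s → R) (m : s) :
    coeff (m : σ →₀ ℕ) (ofCoeffs s c) = c m := by
  classical
  simp [ofCoeffs, coeff_sum, coeff_monomial]

theorem map_ofCoeffs [CommSemiring S] (φ : R →+* S) (s : Finset (σ →₀ ℕ)) (c : s → R) :
    map φ (ofCoeffs s c) = ofCoeffs s (φ ∘ c) := by
  simp [ofCoeffs]

theorem ofCoeffs_coeff_of_support_subset {p : MvPolynomial σ R} {s : Finset (σ →₀ ℕ)}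
    (hs : p.support ⊆ s) : ofCoeffs s (fun m => coeff m p) = p := by
  conv_rhs => rw [as_sum p]
  rw [ofCoeffs, Finset.sum_coe_sort s fun m => monomial m (coeff m p)]
  refine (Finset.sum_subset hs fun m _ hm => ?_).symm
  rw [notMem_support_iff.1 hm, monomial_zero]

end CommSemiring

theorem subsingleton_setOf_totalDegree_sub_C_mul_lt {k : Type*} [Field k]
    (F G : MvPolynomial σ k) :
    {c : k | (F - C c * G).totalDegree < max F.totalDegree G.totalDegree}.Subsingleton := by
  intro x hx y hy
  by_contra hxy
  generalize hd : max F.totalDegree G.totalDegree = d at hx hy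
  have hCmul : ∀ (c : k) (p : MvPolynomial σ k), (C c * p).totalDegree ≤ p.totalDegree :=
    fun c p => by simpa [C_mul'] using totalDegree_smul_le c p
  have hG : G = C (y - x)⁻¹ * ((F - C x * G) - (F - C y * G)) := by
    rw [sub_sub_sub_cancel_left, ← sub_mul, ← C_sub, ← mul_assoc, ← C_mul,
      inv_mul_cancel₀ (sub_ne_zero.2 (Ne.symm hxy)), C_1, one_mul]
  have hGlt : G.totalDegree < d := by
    rw [hG]
    exact (hCmul _ _).trans_lt ((totalDegree_sub _ _).trans_lt (max_lt hx hy))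
  have hFlt : F.totalDegree < d := by
    rw [← sub_add_cancel F (C x * G)]
    exact (totalDegree_add _ _).trans_lt (max_lt hx ((hCmul _ _).trans_lt hGlt))
  exact (max_lt hFlt hGlt).ne hd

theorem span_range_coeff_le_ker_iff [CommSemiring R] [CommSemiring S] (φ : R →+* S)
    (q : MvPolynomial σ R) :
    Ideal.span (Set.range fun m => coeff m q) ≤ RingHom.ker φ ↔ map φ q = 0 := by
  simp [Ideal.span_le, Set.range_subset_iff, MvPolynomial.ext_iff, coeff_map]

theorem exists_mem_zeroLocus_eval_ne_zero {k E ι : Type*} [Field k] [IsAlgClosed k] [Finite ι]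
    [CommRing E] [IsReduced E] (ψ : k →+* E) (w : ι → E) {I : Ideal (MvPolynomial ι k)}
    (hI : I ≤ RingHom.ker (eval₂Hom ψ w)) {h : MvPolynomial ι k} (hh : eval₂Hom ψ w h ≠ 0) :
    ∃ v ∈ zeroLocus k I, eval v h ≠ 0 := by
  by_contra! hv
  have hrad : h ∈ I.radical := by
    rw [← vanishingIdeal_zeroLocus_eq_radical (K := k)]
    exact fun v hvI => by simpa using hv v hvI
  obtain ⟨N, hN⟩ := hrad
  exact hh (IsReduced.eq_zero _ ⟨N, by rw [← map_pow]; exact hI hN⟩)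

theorem IsProductOfNonconstants.of_map {k E : Type*} [Field k] [IsAlgClosed k] [CommRing E]
    [IsDomain E] (ψ : k →+* E) {F : MvPolynomial σ k}
    (hF : (MvPolynomial.map ψ F).IsProductOfNonconstants) : F.IsProductOfNonconstants := by
  obtain ⟨A, B, hA, hB, hAB⟩ := hF
  obtain ⟨m, hmA, hm⟩ := totalDegree_pos_iff.1 hA
  obtain ⟨n, hnB, hn⟩ := totalDegree_pos_iff.1 hB
  -- The unknowns are the coefficients of two factors supported on `A.support` and `B.support`;
  -- `q = 0` says that they multiply to `F`. `(A, B)` is a solution over `E` at which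
  -- `X m * X n` does not vanish.
  let q : MvPolynomial σ (MvPolynomial (A.support ⊕ B.support) k) :=
    ofCoeffs A.support (X ∘ Sum.inl) * ofCoeffs B.support (X ∘ Sum.inr) - map C F
  let w := Sum.elim (fun m : A.support => coeff ↑m A) (fun m : B.support => coeff ↑m B)
  have hw : Ideal.span (Set.range fun m => coeff m q) ≤ RingHom.ker (eval₂Hom ψ w) := by
    rw [span_range_coeff_le_ker_iff]
    simp only [q, map_sub, map_mul, map_ofCoeffs, map_map, eval₂Hom_comp_C, hAB, sub_eq_zero]
    convert congr($(ofCoeffs_coeff_of_support_subset (subset_refl A.support)) *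
      $(ofCoeffs_coeff_of_support_subset (subset_refl B.support))) using 3 <;> ext <;> simp [w]
  have hh : eval₂Hom ψ w (X (Sum.inl ⟨m, hmA⟩) * X (Sum.inr ⟨n, hnB⟩)) ≠ 0 := by
    simpa [w] using mul_ne_zero (mem_support_iff.1 hmA) (mem_support_iff.1 hnB)
  obtain ⟨v, hv, hvh⟩ := exists_mem_zeroLocus_eval_ne_zero ψ w hw hh
  have hv' : map (aeval v).toRingHom q = 0 :=
    (span_range_coeff_le_ker_iff _ q).1 fun p hp => hv p hp
  simp only [q, map_sub, map_mul, map_ofCoeffs, map_map, sub_eq_zero] at hv'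
  obtain ⟨hvm, hvn⟩ : v (Sum.inl ⟨m, hmA⟩) ≠ 0 ∧ v (Sum.inr ⟨n, hnB⟩) ≠ 0 := by simpa using hvh
  refine ⟨ofCoeffs A.support (v ∘ Sum.inl), ofCoeffs B.support (v ∘ Sum.inr),
    totalDegree_pos_iff.2 ⟨m, ?_, hm⟩, totalDegree_pos_iff.2 ⟨n, ?_, hn⟩, ?_⟩
  · simpa [mem_support_iff] using coeff_ofCoeffs A.support (v ∘ Sum.inl) ⟨m, hmA⟩ ▸ hvm
  · simpa [mem_support_iff] using coeff_ofCoeffs B.support (v ∘ Sum.inr) ⟨n, hnB⟩ ▸ hvn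
  · have hC : (aeval v).toRingHom.comp C = RingHom.id k := by ext; simp
    rw [hC, map_id] at hv'
    convert hv'.symm using 3 <;> ext <;> simp

section Ultraproduct

variable {ι : Type*}

theorem eq_of_forall_map_evalRingHom_eq [CommSemiring R] {P Q : MvPolynomial σ (ι → R)}
    (h : ∀ i, map (Pi.evalRingHom (fun _ => R) i) P = map (Pi.evalRingHom _ i) Q) : P = Q := by
  ext m i
  simpa [coeff_map] using congr(coeff m $(h i))

theorem exists_map_evalRingHom_eq [CommSemiring R] (a : ι → MvPolynomial σ R)
    {s : Finset (σ →₀ ℕ)} (hs : ∀ i, (a i).support ⊆ s) :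
    ∃ A : MvPolynomial σ (ι → R), ∀ i, map (Pi.evalRingHom (fun _ => R) i) A = a i :=
  ⟨ofCoeffs s fun m i => coeff ↑m (a i), fun i => by
    rw [map_ofCoeffs]
    exact ofCoeffs_coeff_of_support_subset (hs i)⟩

theorem totalDegree_map_germ_pos [CommSemiring R] {U : Ultrafilter ι}
    {A : MvPolynomial σ (ι → R)}
    (h : ∀ᶠ i in U, 0 < (map (Pi.evalRingHom (fun _ => R) i) A).totalDegree) :
    0 < (map (Germ.coeRingHom (U : Filter ι)) A).totalDegree := by
  by_contra! h0
  have hvanish : ∀ m ∈ A.support, ∀ᶠ i in U, m ≠ 0 → coeff m A i = 0 := by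
    intro m _
    rcases eq_or_ne m 0 with rfl | hm
    · exact .of_forall fun _ h => absurd rfl h
    refine .mono ?_ fun _ h _ => h
    have : coeff m (map (Germ.coeRingHom (U : Filter ι)) A) = 0 := by
      by_contra hc
      exact h0.not_gt (totalDegree_pos_iff.2 ⟨m, mem_support_iff.2 hc, hm⟩)
    rw [coeff_map, Germ.coe_coeRingHom] at this
    exact Germ.coe_eq.1 this
  obtain ⟨i, hi, hvanish_i⟩ := (h.and ((eventually_all_finset A.support).2 hvanish)).exists
  obtain ⟨m, hm, hm0⟩ := totalDegree_pos_iff.1 hi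
  rw [mem_support_iff, coeff_map] at hm
  exact hm (hvanish_i m (mem_support_iff.2 fun h => hm (by simp [h])) hm0)

theorem IsProductOfNonconstants.map_germ [Finite σ] [CommRing R] [IsDomain R]
    (U : Ultrafilter ι) {P : MvPolynomial σ (ι → R)}
    (h : ∀ i, (map (Pi.evalRingHom (fun _ => R) i) P).IsProductOfNonconstants) :
    (map (Germ.coeRingHom (U : Filter ι)) P).IsProductOfNonconstants := by
  choose a b ha hb hab using h
  have hdeg : ∀ i, (a i).totalDegree + (b i).totalDegree ≤ P.totalDegree := by
    intro i
    have ha0 : a i ≠ 0 := by rintro h; simpa [h] using ha i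
    have hb0 : b i ≠ 0 := by rintro h; simpa [h] using hb i
    rw [← totalDegree_mul_of_isDomain ha0 hb0, ← hab i]
    exact totalDegree_map_le _ P
  let s := (Finsupp.finite_of_degree_le (σ := σ) P.totalDegree).toFinset
  have hs : ∀ p : MvPolynomial σ R, p.totalDegree ≤ P.totalDegree → p.support ⊆ s :=
    fun p hp m hm => by
      simpa [s, Finsupp.degree_apply, Finsupp.sum] using (le_totalDegree hm).trans hp
  obtain ⟨A, hA⟩ := exists_map_evalRingHom_eq a fun i => hs _ (by linarith [hdeg i])
  obtain ⟨B, hB⟩ := exists_map_evalRingHom_eq b fun i => hs _ (by linarith [hdeg i])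
  have hP : P = A * B := eq_of_forall_map_evalRingHom_eq fun i => by rw [map_mul, hA, hB, hab]
  refine ⟨map _ A, map _ B, totalDegree_map_germ_pos (.of_forall fun i => ?_),
    totalDegree_map_germ_pos (.of_forall fun i => ?_), by rw [hP, map_mul]⟩
  · exact (hA i).symm ▸ ha i
  · exact (hB i).symm ▸ hb i

end Ultraproduct

theorem isProductOfNonconstants_sub_X_mul_of_infinite {K Ω L : Type*} [Field K] [Field Ω]
    [Algebra K Ω] [Field L] [IsAlgClosed L] [Algebra (RatFunc K) L]
    [Algebra.IsAlgebraic (RatFunc K) L] [Finite σ] (f g : MvPolynomial σ K)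
    (h : {c : Ω |
      (map (algebraMap K Ω) f - C c * map (algebraMap K Ω) g).IsProductOfNonconstants}.Infinite) :
    (map ((algebraMap (RatFunc K) L).comp (algebraMap K (RatFunc K))) f
      - C (algebraMap (RatFunc K) L RatFunc.X)
        * map ((algebraMap (RatFunc K) L).comp (algebraMap K (RatFunc K))) g
      ).IsProductOfNonconstants := by
  set Λ := {c : Ω | (map (algebraMap K Ω) f - C c * map (algebraMap K Ω) g).IsProductOfNonconstants}
  have : Infinite Λ := h.to_subtype
  let U := hyperfilter Λ
  obtain ⟨ρ, hρK, hρX⟩ := Germ.exists_ratFunc_ringHom (algebraMap K Ω) (U := U)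
    hyperfilter_le_cofinite Subtype.val_injective
  set Θ := Germ.coeRingHom (R := Ω) (U : Filter Λ)
  set κ : K →+* (Λ → Ω) := (Pi.constRingHom Λ Ω).comp (algebraMap K Ω)
  let P : MvPolynomial σ (Λ → Ω) := map κ f - C Subtype.val * map κ g
  have hP : (map Θ P).IsProductOfNonconstants := IsProductOfNonconstants.map_germ U fun c => by
    have hκ : (Pi.evalRingHom (fun _ => Ω) c).comp κ = algebraMap K Ω := RingHom.ext fun _ => rfl
    have hc : map (Pi.evalRingHom (fun _ => Ω) c) P
        = map (algebraMap K Ω) f - C c.1 * map (algebraMap K Ω) g := by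
      simp [P, map_map, hκ]
    exact hc ▸ c.2
  let E := AlgebraicClosure (Germ (U : Filter Λ) Ω)
  let _ : Algebra (RatFunc K) E := ((algebraMap _ E).comp ρ).toAlgebra
  let ψ : L →ₐ[RatFunc K] E := IsAlgClosed.lift
  refine IsProductOfNonconstants.of_map ψ.toRingHom ?_
  have hψ : ψ.toRingHom.comp (algebraMap (RatFunc K) L) = (algebraMap _ E).comp ρ :=
    ψ.comp_algebraMap
  convert hP.map_of_injective (algebraMap _ E).injective using 2
  · rfl -- two instance paths to `CommSemiring E`
  have hX : ψ (algebraMap (RatFunc K) L RatFunc.X) = algebraMap _ E (Θ Subtype.val) :=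
    hρX ▸ RingHom.congr_fun hψ RatFunc.X
  simp only [P, map_sub, map_mul, map_C, map_map, ← RingHom.comp_assoc, hψ, ← hρK]
  simp only [RingHom.comp_assoc, AlgHom.toRingHom_eq_coe, RingHom.coe_coe, hX]

end MvPolynomial

open MvPolynomial

theorem stmt_9_general {K : Type*} [Field K] {n : ℕ}
    (f g : MvPolynomial (Fin n) K)
    (d : ℕ) (hd : d = max f.totalDegree g.totalDegree)
    (hspec : Set.Infinite {lam : AlgebraicClosure K |
      (MvPolynomial.map (algebraMap K (AlgebraicClosure K)) f
        - MvPolynomial.C lam * MvPolynomial.map (algebraMap K (AlgebraicClosure K)) g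
          ).totalDegree < d ∨
      ∃ a b : MvPolynomial (Fin n) (AlgebraicClosure K),
        0 < a.totalDegree ∧ 0 < b.totalDegree ∧
        MvPolynomial.map (algebraMap K (AlgebraicClosure K)) f
          - MvPolynomial.C lam * MvPolynomial.map (algebraMap K (AlgebraicClosure K)) g
          = a * b}) :
    ∃ a b : MvPolynomial (Fin n) (AlgebraicClosure (RatFunc K)),
      0 < a.totalDegree ∧ 0 < b.totalDegree ∧
      MvPolynomial.map ((algebraMap (RatFunc K) (AlgebraicClosure (RatFunc K))).comp
          (algebraMap K (RatFunc K))) f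
        - MvPolynomial.C (algebraMap (RatFunc K) (AlgebraicClosure (RatFunc K)) RatFunc.X) *
          MvPolynomial.map ((algebraMap (RatFunc K) (AlgebraicClosure (RatFunc K))).comp
            (algebraMap K (RatFunc K))) g
        = a * b := by
  set F := map (algebraMap K (AlgebraicClosure K)) f
  set G := map (algebraMap K (AlgebraicClosure K)) g
  have hdeg : max F.totalDegree G.totalDegree = d := by
    rw [hd, totalDegree_map_of_injective (algebraMap K _).injective,
      totalDegree_map_of_injective (algebraMap K _).injective]
  apply isProductOfNonconstants_sub_X_mul_of_infinite (Ω := AlgebraicClosure K)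
  refine (hspec.sdiff (subsingleton_setOf_totalDegree_sub_C_mul_lt F G).finite).mono ?_
  rintro c ⟨hlt | hprod, hdrop⟩
  · exact absurd (hdeg ▸ hlt) hdrop
  · exact hprod

/-- If the spectrum `σ(f,g)` of a reduced rational function `f/g` is infinite, then
`f - T·g` is reducible over the algebraic closure of `K(T)`. -/
theorem stmt_9 {K : Type*} [Field K] {n : ℕ}
    (f g : MvPolynomial (Fin n) K) (hg : g ≠ 0) (hfg : IsRelPrime f g)
    (d : ℕ) (hd : d = max f.totalDegree g.totalDegree) (hd1 : 1 ≤ d)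
    (hspec : Set.Infinite {lam : AlgebraicClosure K |
      (MvPolynomial.map (algebraMap K (AlgebraicClosure K)) f
        - MvPolynomial.C lam * MvPolynomial.map (algebraMap K (AlgebraicClosure K)) g
          ).totalDegree < d ∨
      ∃ a b : MvPolynomial (Fin n) (AlgebraicClosure K),
        0 < a.totalDegree ∧ 0 < b.totalDegree ∧
        MvPolynomial.map (algebraMap K (AlgebraicClosure K)) f
          - MvPolynomial.C lam * MvPolynomial.map (algebraMap K (AlgebraicClosure K)) g
          = a * b}) :
    ∃ a b : MvPolynomial (Fin n) (AlgebraicClosure (RatFunc K)),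
      0 < a.totalDegree ∧ 0 < b.totalDegree ∧
      MvPolynomial.map ((algebraMap (RatFunc K) (AlgebraicClosure (RatFunc K))).comp
          (algebraMap K (RatFunc K))) f
        - MvPolynomial.C (algebraMap (RatFunc K) (AlgebraicClosure (RatFunc K)) RatFunc.X) *
          MvPolynomial.map ((algebraMap (RatFunc K) (AlgebraicClosure (RatFunc K))).comp
            (algebraMap K (RatFunc K))) g
        = a * b :=
  stmt_9_general f g d hd hspec
end
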